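/- Let Ψ = ⟨z₁⟩ * ⟨z₂⟩ * ⟨z₃⟩ be the free product of three cyclic groups of order 2, let α̇, β̇ ∈ Aut Ψ be the automorphisms defined by α̇(z₁) = (z₁z₂)⁻¹ z₁ (z₁z₂), α̇(z₂) = (z₁z₂)⁻¹ z₂ (z₁z₂), α̇(z₃) = (z₁z₂)⁻² z₃ (z₁z₂)² and β̇(z₁) = z₁, β̇(z₂) = (z₂z₃)⁻¹ z₂ (z₂z₃), β̇(z₃) = (z₂z₃)⁻¹ z₃ (z₂z₃), and set u = z₁z₂z₃, v = z₂z₃z₁, w = z₃z₁z₂. Then α̇(u) = w⁻¹uw, α̇(v) = v, α̇(w) = (uw)⁻¹w(uw), and β̇(u) = u, β̇(v) = v, β̇(w) = (vu)⁻¹w(vu). -/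

import Mathlib

set_option linter.unusedVariables false

namespace CSP

/-- The free product `Ψ = ⟨z₁⟩ * ⟨z₂⟩ * ⟨z₃⟩` of three cyclic groups of order two. -/
abbrev Psi : Type := Monoid.CoprodI (fun _ : Fin 3 => Multiplicative (ZMod 2))

/-- The generator `zᵢ` of the `i`-th free factor of `Ψ`. -/
def z (i : Fin 3) : Psi :=
  Monoid.CoprodI.of (i := i) (Multiplicative.ofAdd (1 : ZMod 2))

/-- The element `u = z₁z₂z₃` of `Ψ`. -/
def u : Psi := z 0 * z 1 * z 2

/-- The element `v = z₂z₃z₁` of `Ψ`. -/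
def v : Psi := z 1 * z 2 * z 0

/-- The element `w = z₃z₁z₂` of `Ψ`. -/
def w : Psi := z 2 * z 0 * z 1

/-! Both automorphisms send each generator to a conjugate of it, so every identity is a free
cancellation in `Ψ` using only `zᵢ² = 1`. -/

lemma z_mul_self (i : Fin 3) : z i * z i = 1 := by
  have h : Multiplicative.ofAdd (1 : ZMod 2) * Multiplicative.ofAdd 1 = 1 := by decide
  rw [z, ← map_mul, h, map_one]

lemma z_inv (i : Fin 3) : (z i)⁻¹ = z i :=
  inv_eq_of_mul_eq_one_right (z_mul_self i)

lemma z_mul_z_mul (i : Fin 3) (x : Psi) : z i * (z i * x) = x := by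
  rw [← mul_assoc, z_mul_self, one_mul]

/-- Lemma 4.3: for the automorphisms `α̇`, `β̇` of `Ψ` defined by
`α̇(z₁) = (z₁z₂)⁻¹z₁(z₁z₂)`, `α̇(z₂) = (z₁z₂)⁻¹z₂(z₁z₂)`, `α̇(z₃) = (z₁z₂)⁻²z₃(z₁z₂)²`,
`β̇(z₁) = z₁`, `β̇(z₂) = (z₂z₃)⁻¹z₂(z₂z₃)`, `β̇(z₃) = (z₂z₃)⁻¹z₃(z₂z₃)`,
and for `u = z₁z₂z₃`, `v = z₂z₃z₁`, `w = z₃z₁z₂`, one has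
`α̇(u) = w⁻¹uw`, `α̇(v) = v`, `α̇(w) = (uw)⁻¹w(uw)` and
`β̇(u) = u`, `β̇(v) = v`, `β̇(w) = (vu)⁻¹w(vu)`. -/
theorem adot_bdot_on_uvw (adot bdot : Psi ≃* Psi)
    (ha1 : adot (z 0) = (z 0 * z 1)⁻¹ * z 0 * (z 0 * z 1))
    (ha2 : adot (z 1) = (z 0 * z 1)⁻¹ * z 1 * (z 0 * z 1))
    (ha3 : adot (z 2) = ((z 0 * z 1) ^ 2)⁻¹ * z 2 * (z 0 * z 1) ^ 2)
    (hb1 : bdot (z 0) = z 0)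
    (hb2 : bdot (z 1) = (z 1 * z 2)⁻¹ * z 1 * (z 1 * z 2))
    (hb3 : bdot (z 2) = (z 1 * z 2)⁻¹ * z 2 * (z 1 * z 2)) :
    adot u = w⁻¹ * u * w ∧
    adot v = v ∧
    adot w = (u * w)⁻¹ * w * (u * w) ∧
    bdot u = u ∧
    bdot v = v ∧
    bdot w = (v * u)⁻¹ * w * (v * u) := by
  refine ⟨?_, ?_, ?_, ?_, ?_, ?_⟩ <;>
    simp only [u, v, w, map_mul, ha1, ha2, ha3, hb1, hb2, hb3, mul_inv_rev, z_inv, pow_two,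
      mul_assoc, z_mul_z_mul, z_mul_self, mul_one]

end CSP
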